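/- arXiv:2509.18832 — 2 statements merged into one kernel-verified Lean document; each statement's English description precedes it below -/
import Mathlib

section
/- Let 0 < α ≤ 1. There exists n₀(α) such that the following holds for all n ≥ n₀(α) and all natural numbers m with αn ≤ m ≤ n/2. Let 0 < δ < 1 and let G be a digraph on n vertices with minimum semi-degree δ⁰(G) ≥ δ·n. Then there exists a vertex subset W of V(G) with |W| = m such that δ⁰(G[W]) ≥ (δ − 2n^{−1/3})·m and δ⁰(G ∖ W) ≥ (δ − 2n^{−1/3})·(n − m). -/
/-!
Pick `W` among the `m`-subsets of the `n` vertices. For a fixed set `N` with `|N| = d`, the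
`k`-th factorial moment of `|N ∩ W|` over all `W` is `(d)_k (m)_k / (n)_k ≤ μ^k` with
`μ = d m / n`, so Markov's inequality for `C(|N ∩ W|, k)` with `k ≈ s / 2` shows that at most a
`(1 + s / (2n))^{-k}` fraction of the `W` have `|N ∩ W| ≥ μ + s`; the lower tail is the upper
tail of `|N ∩ Wᶜ|`. For `s = 2 n^{-1/3} m ≥ 2 α n^{2/3}` we get `k s / n ≳ α² n^{1/3}`, and
already `(1 + t)^{4j} ≥ (j t)^4` makes this fraction smaller than `1 / (4n)`. A union bound over
the `2n` in- and out-neighbourhoods then leaves a `W` that meets every neighbourhood in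
`μ ± s` vertices, and such a `W` has the required semi-degrees on both sides.
-/

open Finset

namespace Nat

theorem descFactorial_mul_descFactorial_mul_pow_le {d m n : ℕ} (hd : d ≤ n) (hm : m ≤ n) :
    ∀ k : ℕ, d.descFactorial k * m.descFactorial k * n ^ k ≤ (d * m) ^ k * n.descFactorial k
  | 0 => by simp
  | k + 1 => by
    have step : (d - k) * (m - k) * n ≤ d * m * (n - k) := by
      by_cases hk : k ≤ d ∧ k ≤ m
      · obtain ⟨hkd, hkm⟩ := hk
        zify [hkd, hkm, hkd.trans hd]
        nlinarith [mul_nonneg (Int.natCast_nonneg k) (Int.natCast_nonneg d),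
          mul_nonneg (Int.natCast_nonneg k) (Int.natCast_nonneg n)]
      · rcases not_and_or.1 hk with hk | hk <;> simp [Nat.sub_eq_zero_of_le (not_le.1 hk).le]
    calc d.descFactorial (k + 1) * m.descFactorial (k + 1) * n ^ (k + 1)
        = ((d - k) * (m - k) * n) * (d.descFactorial k * m.descFactorial k * n ^ k) := by
          simp only [descFactorial_succ, pow_succ]; ring
      _ ≤ (d * m * (n - k)) * ((d * m) ^ k * n.descFactorial k) :=
          Nat.mul_le_mul step (descFactorial_mul_descFactorial_mul_pow_le hd hm k)
      _ = (d * m) ^ (k + 1) * n.descFactorial (k + 1) := by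
          simp only [descFactorial_succ, pow_succ]; ring

end Nat

section UniformSubsets

variable {γ : Type*} [Fintype γ] [DecidableEq γ]

theorem sum_choose_card_inter_powersetCard (N : Finset γ) {m k : ℕ} (hkm : k ≤ m) :
    ∑ W ∈ powersetCard m univ, (#(N ∩ W)).choose k
      = (#N).choose k * (Fintype.card γ - k).choose (m - k) := by
  have hbelow : ∀ W, (#(N ∩ W)).choose k = #((powersetCard k N).bipartiteAbove (· ⊇ ·) W) := by
    intro W
    rw [← card_powersetCard, bipartiteAbove]
    congr 1
    ext K
    simp only [mem_powersetCard, mem_filter, subset_inter_iff]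
    tauto
  have habove : ∀ K ∈ powersetCard k N,
      #((powersetCard m univ).bipartiteBelow (· ⊇ ·) K) = (Fintype.card γ - k).choose (m - k) := by
    intro K hK
    rw [mem_powersetCard] at hK
    rw [bipartiteBelow, card_filter_powersetCard_subset K univ m (subset_univ K) (hK.2 ▸ hkm),
      card_univ, hK.2]
  simp_rw [hbelow]
  rw [sum_card_bipartiteAbove_eq_sum_card_bipartiteBelow, sum_congr rfl habove, sum_const,
    card_powersetCard, smul_eq_mul]

theorem card_filter_le_card_inter_mul_choose_le (N : Finset γ) {m k : ℕ} (a : ℕ) (hkm : k ≤ m) :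
    #((powersetCard m univ).filter (fun W => a ≤ #(N ∩ W))) * a.choose k
      ≤ (#N).choose k * (Fintype.card γ - k).choose (m - k) := by
  rw [← sum_choose_card_inter_powersetCard N hkm, ← smul_eq_mul]
  calc #((powersetCard m univ).filter (fun W => a ≤ #(N ∩ W))) • a.choose k
      ≤ ∑ W ∈ (powersetCard m univ).filter (fun W => a ≤ #(N ∩ W)), (#(N ∩ W)).choose k :=
        card_nsmul_le_sum _ _ _ fun W hW => Nat.choose_le_choose k (mem_filter.1 hW).2
    _ ≤ ∑ W ∈ powersetCard m univ, (#(N ∩ W)).choose k :=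
        sum_le_sum_of_subset (filter_subset _ _)

theorem card_filter_le_card_inter_mul_descFactorial_mul_pow_le (N : Finset γ) {m k : ℕ} (a : ℕ)
    (hkm : k ≤ m) (hm : m ≤ Fintype.card γ) :
    #((powersetCard m univ).filter (fun W => a ≤ #(N ∩ W))) * a.descFactorial k
        * Fintype.card γ ^ k
      ≤ (Fintype.card γ).choose m * (#N * m) ^ k := by
  set n := Fintype.card γ
  set c := #((powersetCard m univ).filter (fun W => a ≤ #(N ∩ W)))
  have hmarkov := card_filter_le_card_inter_mul_choose_le N a hkm
  have hfactorial : c * a.descFactorial k * n.descFactorial k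
      ≤ n.choose m * ((#N).descFactorial k * m.descFactorial k) := by
    simp only [Nat.descFactorial_eq_factorial_mul_choose]
    calc c * (k.factorial * a.choose k) * (k.factorial * n.choose k)
        = c * a.choose k * n.choose k * (k.factorial * k.factorial) := by ring
      _ ≤ (#N).choose k * (n - k).choose (m - k) * n.choose k * (k.factorial * k.factorial) := by
        gcongr
      _ = n.choose m * (k.factorial * (#N).choose k * (k.factorial * m.choose k)) := by
        rw [mul_assoc ((#N).choose k), mul_comm ((n - k).choose _), ← Nat.choose_mul hkm]
        ring
  have hcross := Nat.descFactorial_mul_descFactorial_mul_pow_le (card_le_univ N) hm k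
  refine Nat.le_of_mul_le_mul_right ?_ (Nat.descFactorial_pos.2 (hkm.trans hm))
  calc c * a.descFactorial k * n ^ k * n.descFactorial k
      = c * a.descFactorial k * n.descFactorial k * n ^ k := by ring
    _ ≤ n.choose m * ((#N).descFactorial k * m.descFactorial k) * n ^ k := by gcongr
    _ ≤ n.choose m * ((#N * m) ^ k * n.descFactorial k) := by
      rw [mul_assoc]; gcongr
    _ = n.choose m * (#N * m) ^ k * n.descFactorial k := by ring

theorem card_filter_add_le_card_inter_mul_pow_le (N : Finset γ) {m k : ℕ} {s : ℝ} (hs : 0 ≤ s)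
    (hkm : k ≤ m) (hm : m ≤ Fintype.card γ) (hks : (k : ℝ) ≤ s / 2 + 1) :
    (#((powersetCard m univ).filter
        (fun W => (#N : ℝ) * m / Fintype.card γ + s ≤ #(N ∩ W))) : ℝ)
        * ((#N : ℝ) * m / Fintype.card γ + s / 2) ^ k
      ≤ (Fintype.card γ).choose m * ((#N : ℝ) * m / Fintype.card γ) ^ k := by
  set n := Fintype.card γ
  set μ : ℝ := #N * m / n
  have hμn : μ * n = #N * m := by
    rcases Nat.eq_zero_or_pos n with hn | hn
    · have : IsEmpty γ := Fintype.card_eq_zero_iff.1 hn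
      simp [μ, hn, Subsingleton.elim N ∅]
    · exact div_mul_cancel₀ _ (by positivity)
  have hnk : (0 : ℝ) < n ^ k := by
    rcases Nat.eq_zero_or_pos n with hn | hn
    · simp [show k = 0 by omega]
    · positivity
  set a := ⌈μ + s⌉₊
  have ha : μ + s ≤ a := Nat.le_ceil _
  have hsub : (powersetCard m univ).filter (fun W => μ + s ≤ #(N ∩ W))
      ⊆ (powersetCard m univ).filter (fun W => a ≤ #(N ∩ W)) :=
    monotone_filter_right _ fun _ _ hW => Nat.ceil_le.2 hW
  have hka : k ≤ a + 1 := by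
    have : (k : ℝ) ≤ a + 1 := by linarith [show 0 ≤ μ by positivity]
    exact_mod_cast this
  have hlow : (μ + s / 2) ^ k ≤ a.descFactorial k :=
    calc (μ + s / 2) ^ k ≤ ((a + 1 - k : ℕ) : ℝ) ^ k := by
          gcongr
          push_cast [hka]
          linarith
      _ ≤ a.descFactorial k := by exact_mod_cast Nat.pow_sub_le_descFactorial a k
  refine le_of_mul_le_mul_right ?_ hnk
  calc (#((powersetCard m univ).filter (fun W => μ + s ≤ #(N ∩ W))) : ℝ) * (μ + s / 2) ^ k * n ^ k
      ≤ (#((powersetCard m univ).filter (fun W => a ≤ #(N ∩ W))) : ℝ) * a.descFactorial k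
          * n ^ k := by
        gcongr
    _ ≤ n.choose m * (#N * m) ^ k := by
        exact_mod_cast card_filter_le_card_inter_mul_descFactorial_mul_pow_le N a hkm hm
    _ = n.choose m * μ ^ k * n ^ k := by rw [mul_assoc, ← mul_pow, hμn]

theorem card_filter_add_le_card_inter_le (N : Finset γ) {m k : ℕ} {s : ℝ} (hs : 0 < s)
    (hkm : k ≤ m) (hm : m ≤ Fintype.card γ) (hks : (k : ℝ) ≤ s / 2 + 1) :
    (#((powersetCard m univ).filter
        (fun W => (#N : ℝ) * m / Fintype.card γ + s ≤ #(N ∩ W))) : ℝ)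
      ≤ (Fintype.card γ).choose m / (1 + s / (2 * Fintype.card γ)) ^ k := by
  set n := Fintype.card γ
  set μ : ℝ := #N * m / n
  have hμ : μ / n ≤ 1 := by
    refine div_le_one_of_le₀ (div_le_of_le_mul₀ (by positivity) (by positivity) ?_) (by positivity)
    exact_mod_cast Nat.mul_le_mul (card_le_univ N) hm
  have hμs : μ * (1 + s / (2 * n)) ≤ μ + s / 2 := by
    have : μ * (s / (2 * n)) = μ / n * (s / 2) := by ring
    nlinarith
  have hpos : 0 < μ + s / 2 := by positivity
  calc _ ≤ n.choose m * μ ^ k / (μ + s / 2) ^ k := by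
        rw [le_div_iff₀ (by positivity)]
        exact card_filter_add_le_card_inter_mul_pow_le N hs.le hkm hm hks
    _ = n.choose m * (μ / (μ + s / 2)) ^ k := by rw [div_pow μ, mul_div_assoc]
    _ ≤ n.choose m * (1 / (1 + s / (2 * n))) ^ k := by
        refine mul_le_mul_of_nonneg_left (pow_le_pow_left₀ (by positivity) ?_ k) (by positivity)
        rw [div_le_div_iff₀ hpos (by positivity)]
        linarith
    _ = n.choose m / (1 + s / (2 * n)) ^ k := by rw [one_div_pow, mul_one_div]

theorem card_filter_card_inter_le_sub_le (N : Finset γ) {m : ℕ} (s : ℝ)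
    (hm : m ≤ Fintype.card γ) :
    #((powersetCard m univ).filter
        (fun W => (#(N ∩ W) : ℝ) ≤ #N * m / Fintype.card γ - s))
      ≤ #((powersetCard (Fintype.card γ - m) univ).filter
        (fun W => (#N : ℝ) * ↑(Fintype.card γ - m) / Fintype.card γ + s ≤ #(N ∩ W))) := by
  set n := Fintype.card γ
  have hmean : (#N : ℝ) * ↑(n - m) / n = #N - #N * m / n := by
    rcases Nat.eq_zero_or_pos n with hn | hn
    · have : IsEmpty γ := Fintype.card_eq_zero_iff.1 hn
      simp [hn, Subsingleton.elim N ∅]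
    · rw [Nat.cast_sub hm]
      field_simp
  refine card_le_card_of_injOn compl (fun W hW => ?_) compl_injective.injOn
  simp only [coe_filter, mem_powersetCard, Set.mem_ofPred_eq, subset_univ, true_and] at hW ⊢
  refine ⟨by rw [card_compl, hW.1], ?_⟩
  have hsplit : #(N ∩ W) + #(N ∩ Wᶜ) = #N := by
    rw [← sdiff_eq_inter_compl]
    exact card_inter_add_card_sdiff N W
  have : (#(N ∩ Wᶜ) : ℝ) = #N - #(N ∩ W) := by
    rw [← hsplit]; push_cast; ring
  rw [hmean, this]
  linarith [hW.2]

theorem card_filter_le_abs_card_inter_sub_le (N : Finset γ) {m k : ℕ} {s : ℝ} (hs : 0 < s)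
    (hm : m ≤ Fintype.card γ) (hkm : k ≤ m) (hkm' : k ≤ Fintype.card γ - m)
    (hks : (k : ℝ) ≤ s / 2 + 1) :
    (#((powersetCard m univ).filter
        (fun W => s ≤ |(#(N ∩ W) : ℝ) - #N * m / Fintype.card γ|)) : ℝ)
      ≤ 2 * (Fintype.card γ).choose m / (1 + s / (2 * Fintype.card γ)) ^ k := by
  set n := Fintype.card γ
  set P := powersetCard m (univ : Finset γ)
  have hsplit : P.filter (fun W => s ≤ |(#(N ∩ W) : ℝ) - #N * m / n|)
      ⊆ P.filter (fun W => (#N : ℝ) * m / n + s ≤ #(N ∩ W))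
        ∪ P.filter (fun W => (#(N ∩ W) : ℝ) ≤ #N * m / n - s) := by
    intro W
    simp only [mem_union, mem_filter, le_abs']
    rintro ⟨hW, h | h⟩
    · exact Or.inr ⟨hW, by linarith⟩
    · exact Or.inl ⟨hW, by linarith⟩
  have hlower := card_filter_card_inter_le_sub_le N s hm
  calc _ ≤ (#(P.filter (fun W => (#N : ℝ) * m / n + s ≤ #(N ∩ W))) : ℝ)
        + #(P.filter (fun W => (#(N ∩ W) : ℝ) ≤ #N * m / n - s)) := by
        exact_mod_cast (card_le_card hsplit).trans (card_union_le _ _)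
    _ ≤ n.choose m / (1 + s / (2 * n)) ^ k + n.choose (n - m) / (1 + s / (2 * n)) ^ k := by
        gcongr
        · exact card_filter_add_le_card_inter_le N hs hkm hm hks
        · exact (Nat.cast_le.2 hlower).trans
            (card_filter_add_le_card_inter_le N hs hkm' (Nat.sub_le n m) hks)
    _ = 2 * n.choose m / (1 + s / (2 * n)) ^ k := by rw [Nat.choose_symm hm]; ring

theorem exists_card_eq_forall_abs_card_inter_sub_lt {ι : Type*} [Fintype ι]
    (N : ι → Finset γ) {m k : ℕ} {s : ℝ} (hs : 0 < s)
    (hm : m ≤ Fintype.card γ) (hkm : k ≤ m) (hkm' : k ≤ Fintype.card γ - m)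
    (hks : (k : ℝ) ≤ s / 2 + 1)
    (hι : 2 * Fintype.card ι < (1 + s / (2 * Fintype.card γ)) ^ k) :
    ∃ W : Finset γ, #W = m ∧ ∀ i, |(#(N i ∩ W) : ℝ) - #(N i) * m / Fintype.card γ| < s := by
  set n := Fintype.card γ
  set P := powersetCard m (univ : Finset γ)
  set bad := fun i => P.filter (fun W => s ≤ |(#(N i ∩ W) : ℝ) - #(N i) * m / n|)
  by_contra! hall
  have hcover : P ⊆ univ.biUnion bad := by
    intro W hW
    obtain ⟨i, hi⟩ := hall W (mem_powersetCard.1 hW).2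
    exact mem_biUnion.2 ⟨i, mem_univ i, mem_filter.2 ⟨hW, hi⟩⟩
  have hC : (0 : ℝ) < n.choose m := by exact_mod_cast Nat.choose_pos hm
  have hpow : (0 : ℝ) < (1 + s / (2 * n)) ^ k := by positivity
  have : (n.choose m : ℝ) < n.choose m :=
    calc (n.choose m : ℝ) = #P := by rw [card_powersetCard, card_univ]
      _ ≤ ∑ i, (#(bad i) : ℝ) := by exact_mod_cast (card_le_card hcover).trans card_biUnion_le
      _ ≤ ∑ _i : ι, 2 * n.choose m / (1 + s / (2 * n)) ^ k :=
          sum_le_sum fun i _ => card_filter_le_abs_card_inter_sub_le (N i) hs hm hkm hkm' hks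
      _ = 2 * Fintype.card ι * n.choose m / (1 + s / (2 * n)) ^ k := by
          rw [sum_const, card_univ, nsmul_eq_mul]; ring
      _ < n.choose m := by
          rw [div_lt_iff₀ hpow]
          nlinarith
  exact lt_irrefl _ this

theorem le_card_inter_and_le_card_sdiff {N W : Finset γ} {δ ε : ℝ}
    (hN : δ * Fintype.card γ ≤ #N) (hε : 0 ≤ ε) (hW : 2 * #W ≤ Fintype.card γ)
    (hdev : |(#(N ∩ W) : ℝ) - #N * #W / Fintype.card γ| < ε * #W) :
    (δ - ε) * #W ≤ #(N ∩ W) ∧ (δ - ε) * (Fintype.card γ - #W) ≤ #(N \ W) := by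
  set n := Fintype.card γ
  have hWn : (2 * #W : ℝ) ≤ n := by exact_mod_cast hW
  have hn : (0 : ℝ) < n := by
    have : (0 : ℝ) < ε * #W := (abs_nonneg _).trans_lt hdev
    nlinarith
  have hmean : δ * #W ≤ #N * #W / n := by
    rw [le_div_iff₀ hn]; nlinarith
  have hsdiff : (#(N \ W) : ℝ) = #N - #(N ∩ W) := by
    rw [← card_inter_add_card_sdiff N W]; push_cast; ring
  have hcompl : (#N : ℝ) - #N * #W / n = #N * (n - #W) / n := by field_simp
  have hmean' : δ * (n - #W) ≤ #N * (n - #W) / n := by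
    rw [le_div_iff₀ hn]; nlinarith
  obtain ⟨hlo, hhi⟩ := abs_lt.1 hdev
  constructor <;> nlinarith

theorem natCard_subtype_mem_and (W : Finset γ) (p : γ → Prop) [DecidablePred p] :
    Nat.card {u // u ∈ W ∧ p u} = #(univ.filter p ∩ W) := by
  rw [Nat.card_eq_fintype_card, Fintype.card_subtype]
  congr 1; ext; simp [and_comm]

theorem natCard_subtype_notMem_and (W : Finset γ) (p : γ → Prop) [DecidablePred p] :
    Nat.card {u // u ∉ W ∧ p u} = #(univ.filter p \ W) := by
  rw [Nat.card_eq_fintype_card, Fintype.card_subtype]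
  congr 1; ext; simp [and_comm]

end UniformSubsets

theorem exists_split_semiDegree {γ : Type*} [Fintype γ] (G : γ → γ → Prop) {δ ε : ℝ} {m k : ℕ}
    (hdeg : ∀ v, δ * Fintype.card γ ≤ (Nat.card {u // G v u} : ℝ) ∧
      δ * Fintype.card γ ≤ (Nat.card {u // G u v} : ℝ))
    (hs : 0 < ε * m) (hm : 2 * m ≤ Fintype.card γ) (hkm : k ≤ m) (hks : (k : ℝ) ≤ ε * m / 2 + 1)
    (hk : 4 * Fintype.card γ < (1 + ε * m / (2 * Fintype.card γ)) ^ k) :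
    ∃ W : Finset γ, #W = m ∧
      (∀ v ∈ W, (δ - ε) * m ≤ (Nat.card {u // u ∈ W ∧ G v u} : ℝ) ∧
        (δ - ε) * m ≤ (Nat.card {u // u ∈ W ∧ G u v} : ℝ)) ∧
      (∀ v ∉ W, (δ - ε) * (Fintype.card γ - m) ≤ (Nat.card {u // u ∉ W ∧ G v u} : ℝ) ∧
        (δ - ε) * (Fintype.card γ - m) ≤ (Nat.card {u // u ∉ W ∧ G u v} : ℝ)) := by
  classical
  have hε : 0 ≤ ε := (pos_of_mul_pos_left hs (Nat.cast_nonneg m)).le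
  set N : γ ⊕ γ → Finset γ := Sum.elim (fun v => univ.filter (G v)) (fun v => univ.filter (G · v))
  have hN : ∀ i, δ * Fintype.card γ ≤ #(N i) := by
    rintro (v | v)
    · simpa [N, Nat.card_eq_fintype_card, Fintype.card_subtype] using (hdeg v).1
    · simpa [N, Nat.card_eq_fintype_card, Fintype.card_subtype] using (hdeg v).2
  obtain ⟨W, rfl, hW⟩ := exists_card_eq_forall_abs_card_inter_sub_lt N hs (by omega) hkm
    (by omega) hks (by rw [Fintype.card_sum]; push_cast; linarith)
  have hsplit := fun i => le_card_inter_and_le_card_sdiff (hN i) hε hm (hW i)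
  refine ⟨W, rfl, fun v _ => ?_, fun v _ => ?_⟩
  · simpa only [natCard_subtype_mem_and] using ⟨(hsplit (.inl v)).1, (hsplit (.inr v)).1⟩
  · simpa only [natCard_subtype_notMem_and] using ⟨(hsplit (.inl v)).2, (hsplit (.inr v)).2⟩

theorem mul_pow_four_le_one_add_pow {t : ℝ} (ht : 0 ≤ t) (j : ℕ) :
    (j * t) ^ 4 ≤ (1 + t) ^ (4 * j) :=
  calc (j * t) ^ 4 ≤ (1 + j * t) ^ 4 := by gcongr; linarith [mul_nonneg j.cast_nonneg ht]
    _ ≤ ((1 + t) ^ j) ^ 4 := by gcongr; exact one_add_mul_le_pow (by linarith) j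
    _ = (1 + t) ^ (4 * j) := by rw [← pow_mul, mul_comm]

theorem exists_nat_le_half_lt_one_add_pow {s n B : ℝ} (hs : 16 ≤ s) (hn : 0 < n)
    (hB : B < (s ^ 2 / (32 * n)) ^ 4) :
    ∃ k : ℕ, (k : ℝ) ≤ s / 2 ∧ B < (1 + s / (2 * n)) ^ k := by
  set j := ⌊s / 8⌋₊
  have hj : (j : ℝ) ≤ s / 8 := Nat.floor_le (by linarith)
  have hj' : s / 16 ≤ j := by linarith [Nat.lt_floor_add_one (s / 8)]
  refine ⟨4 * j, by push_cast; linarith, ?_⟩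
  calc B < (s / 16 * (s / (2 * n))) ^ 4 := by convert hB using 2; field_simp; ring
    _ ≤ (j * (s / (2 * n))) ^ 4 := by gcongr
    _ ≤ (1 + s / (2 * n)) ^ (4 * j) := mul_pow_four_le_one_add_pow (by positivity) j

theorem two_rpow_neg_third_mul_bounds {α : ℝ} (hα0 : 0 < α) (hα1 : α ≤ 1) {n m : ℕ}
    (hn : (2 ^ 15 / α ^ 8) ^ 3 ≤ (n : ℝ)) (hαm : α * n ≤ m) :
    2 * (n : ℝ) ^ (-(1 / 3 : ℝ)) * m ≤ 2 * m ∧ 16 ≤ 2 * (n : ℝ) ^ (-(1 / 3 : ℝ)) * m ∧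
      4 * n < ((2 * (n : ℝ) ^ (-(1 / 3 : ℝ)) * m) ^ 2 / (32 * n)) ^ 4 := by
  set x := (n : ℝ) ^ (1 / 3 : ℝ)
  have hx3 : x ^ 3 = n := by
    rw [← Real.rpow_natCast, ← Real.rpow_mul n.cast_nonneg]; norm_num
  have hxinv : (n : ℝ) ^ (-(1 / 3 : ℝ)) = x⁻¹ := Real.rpow_neg n.cast_nonneg _
  have hα8 : α ^ 8 ≤ α := pow_le_of_le_one hα0.le hα1 (by norm_num)
  have hx : 2 ^ 15 / α ^ 8 ≤ x :=
    le_of_pow_le_pow_left₀ (by norm_num) (by positivity) (hx3 ▸ hn)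
  have hαx : 2 ^ 15 ≤ α ^ 8 * x := by rwa [div_le_iff₀' (by positivity)] at hx
  have hx1 : 1 ≤ x := by nlinarith [pow_le_one₀ hα0.le hα1 (n := 8), pow_pos hα0 8]
  rw [hxinv, ← hx3]
  set s := 2 * x⁻¹ * m
  have hs : 2 * α * x ^ 2 ≤ s := by
    have : 2 * α * x ^ 2 = 2 * x⁻¹ * (α * x ^ 3) := by field_simp
    rw [this, hx3]
    exact mul_le_mul_of_nonneg_left hαm (by positivity)
  refine ⟨?_, ?_, ?_⟩
  · have : x⁻¹ ≤ 1 := inv_le_one_of_one_le₀ hx1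
    have : (0 : ℝ) ≤ m := m.cast_nonneg
    nlinarith
  · nlinarith
  · have hsq : α ^ 2 * x / 8 ≤ s ^ 2 / (32 * x ^ 3) := by
      rw [le_div_iff₀ (by positivity)]
      nlinarith [pow_le_pow_left₀ (by positivity) hs 2]
    calc 4 * x ^ 3 < 8 * x ^ 3 := by nlinarith
      _ ≤ α ^ 8 * x * x ^ 3 / 4096 := by nlinarith
      _ = (α ^ 2 * x / 8) ^ 4 := by ring
      _ ≤ (s ^ 2 / (32 * x ^ 3)) ^ 4 := by gcongr

/-- For `0 < α ≤ 1` there is `n₀(α)` such that for all `n ≥ n₀(α)`, all `m` with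
`α n ≤ m ≤ n / 2`, all `0 < δ < 1` and every loopless digraph `G` on `n` vertices
with minimum semi-degree at least `δ n`, there is a vertex subset `W` of size `m`
such that `δ⁰(G[W]) ≥ (δ − 2 n^{−1/3}) m` and
`δ⁰(G ∖ W) ≥ (δ − 2 n^{−1/3}) (n − m)`. -/
theorem digraph_split_semiDegree (α : ℝ) (hα0 : 0 < α) (hα1 : α ≤ 1) :
    ∃ n₀ : ℕ, ∀ n : ℕ, n₀ ≤ n →
    ∀ m : ℕ, α * n ≤ (m : ℝ) → (m : ℝ) ≤ (n : ℝ) / 2 →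
    ∀ δ : ℝ, 0 < δ → δ < 1 →
    ∀ G : Fin n → Fin n → Prop, (∀ v, ¬ G v v) →
    (∀ v : Fin n,
      δ * n ≤ (Nat.card {u : Fin n // G v u} : ℝ) ∧
      δ * n ≤ (Nat.card {u : Fin n // G u v} : ℝ)) →
    ∃ W : Finset (Fin n), W.card = m ∧
      (∀ v ∈ W,
        (δ - 2 * (n : ℝ) ^ (-(1 / 3 : ℝ))) * m
          ≤ (Nat.card {u : Fin n // u ∈ W ∧ G v u} : ℝ) ∧
        (δ - 2 * (n : ℝ) ^ (-(1 / 3 : ℝ))) * m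
          ≤ (Nat.card {u : Fin n // u ∈ W ∧ G u v} : ℝ)) ∧
      (∀ v ∉ W,
        (δ - 2 * (n : ℝ) ^ (-(1 / 3 : ℝ))) * ((n : ℝ) - m)
          ≤ (Nat.card {u : Fin n // u ∉ W ∧ G v u} : ℝ) ∧
        (δ - 2 * (n : ℝ) ^ (-(1 / 3 : ℝ))) * ((n : ℝ) - m)
          ≤ (Nat.card {u : Fin n // u ∉ W ∧ G u v} : ℝ)) := by
  refine ⟨⌈(2 ^ 15 / α ^ 8) ^ 3⌉₊, fun n hn m hαm hm δ _ _ G _ hdeg => ?_⟩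
  have hn' : (2 ^ 15 / α ^ 8) ^ 3 ≤ (n : ℝ) := Nat.ceil_le.1 hn
  obtain ⟨hsm, hs16, hsn⟩ := two_rpow_neg_third_mul_bounds hα0 hα1 hn' hαm
  obtain ⟨k, hks, hk⟩ :=
    exists_nat_le_half_lt_one_add_pow hs16 (hn'.trans_lt' (by positivity)) hsn
  have hkm : k ≤ m := by exact_mod_cast (show (k : ℝ) ≤ m by linarith)
  have h2m : 2 * m ≤ n := by exact_mod_cast (show (2 * m : ℝ) ≤ n by linarith)
  simpa using exists_split_semiDegree G (by simpa using hdeg) (by linarith) (by simpa using h2m)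
    hkm (by linarith) (by simpa using hk)
end

section
/- There exists a natural number ℓ₀ such that the following holds for every ℓ ≥ ℓ₀. Let δ > 0 and let m, k be natural numbers with m ≤ 2^k. Let G be a digraph on n = ℓm vertices with minimum total degree δ(G) ≥ δ·n. Then there exists a partition of V(G) into parts V₁, …, V_m such that for every i ∈ [m] one has |V_i| = ℓ and δ(G[V_i]) ≥ (δ − 10ℓ^{−1/3})·ℓ. -/
open Finset Real

namespace DPart

variable {V : Type} [DecidableEq V]

noncomputable def mass (p : ℝ) (W S : Finset V) : ℝ :=
  (∏ _i ∈ S, p) * ∏ _i ∈ W \ S, (1 - p)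

noncomputable def Xc (p : ℝ) (W : Finset V) (c : V → ℝ) (S : Finset V) : ℝ :=
  ∑ u ∈ W, c u * ((if u ∈ S then (1:ℝ) else 0) - p)

lemma mass_nonneg {p : ℝ} (h0 : 0 ≤ p) (h1 : p ≤ 1) (W S : Finset V) : 0 ≤ mass p W S := by
  apply mul_nonneg <;> apply Finset.prod_nonneg <;> intros <;> linarith

lemma sum_mass (p : ℝ) (W : Finset V) : ∑ S ∈ W.powerset, mass p W S = 1 := by
  have h := Finset.prod_add (fun _ : V => p) (fun _ : V => 1 - p) W
  simp only [add_sub_cancel, Finset.prod_const, one_pow] at h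
  simp only [mass, Finset.prod_const]
  exact h.symm

lemma Xc_neg (p : ℝ) (W : Finset V) (c : V → ℝ) (S : Finset V) :
    Xc p W (fun u => -(c u)) S = - Xc p W c S := by
  simp only [Xc, ← Finset.sum_neg_distrib]
  exact Finset.sum_congr rfl fun u _ => by ring

lemma sum_mass_exp (p : ℝ) (W : Finset V) (c : V → ℝ) :
    ∑ S ∈ W.powerset, mass p W S * Real.exp (Xc p W c S)
      = ∏ u ∈ W, (p * Real.exp (c u * (1 - p)) + (1 - p) * Real.exp (c u * (0 - p))) := by
  rw [Finset.prod_add]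
  refine Finset.sum_congr rfl fun S hS => ?_
  rw [Finset.mem_powerset] at hS
  have hsplit : Xc p W c S = (∑ u ∈ S, c u * (1 - p)) + ∑ u ∈ W \ S, c u * (0 - p) := by
    rw [Xc, ← Finset.sum_sdiff hS, add_comm]
    congr 1
    · exact Finset.sum_congr rfl fun u hu => by rw [if_pos hu]
    · exact Finset.sum_congr rfl fun u hu => by
        rw [if_neg (Finset.mem_sdiff.mp hu).2]
  rw [hsplit, Real.exp_add, Finset.prod_mul_distrib, Finset.prod_mul_distrib,
    ← Real.exp_sum, ← Real.exp_sum]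
  simp only [mass]
  ring

lemma exp_le_quad {x : ℝ} (hx : |x| ≤ 1) : Real.exp x ≤ 1 + x + x ^ 2 := by
  have h := Real.exp_bound hx (n := 2) (by norm_num)
  have h2 : ∑ m ∈ Finset.range 2, x ^ m / (m.factorial : ℝ) = 1 + x := by
    simp [Finset.sum_range_succ]
  rw [h2] at h
  have h3 := (abs_le.mp h).2
  have hx2 : |x| ^ 2 = x ^ 2 := sq_abs x
  rw [hx2] at h3
  norm_num [Nat.factorial] at h3
  nlinarith [sq_nonneg x]

lemma factor_le {p x : ℝ} (h0 : 0 ≤ p) (h1 : p ≤ 1) (hx : |x| ≤ 1) :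
    p * Real.exp (x * (1 - p)) + (1 - p) * Real.exp (x * (0 - p)) ≤ Real.exp (x ^ 2) := by
  have hax : |x| * |1 - p| ≤ 1 := by
    have : |1 - p| ≤ 1 := by rw [abs_le]; constructor <;> linarith
    calc |x| * |1 - p| ≤ 1 * 1 := by
          apply mul_le_mul hx this (abs_nonneg _) (by norm_num)
      _ = 1 := by ring
  have hax2 : |x| * |0 - p| ≤ 1 := by
    have : |0 - p| ≤ 1 := by rw [abs_le]; constructor <;> linarith
    calc |x| * |0 - p| ≤ 1 * 1 := by
          apply mul_le_mul hx this (abs_nonneg _) (by norm_num)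
      _ = 1 := by ring
  have e1 : Real.exp (x * (1 - p)) ≤ 1 + x * (1 - p) + (x * (1 - p)) ^ 2 :=
    exp_le_quad (by rw [abs_mul]; exact hax)
  have e2 : Real.exp (x * (0 - p)) ≤ 1 + x * (0 - p) + (x * (0 - p)) ^ 2 :=
    exp_le_quad (by rw [abs_mul]; exact hax2)
  have key : p * (1 + x * (1 - p) + (x * (1 - p)) ^ 2)
      + (1 - p) * (1 + x * (0 - p) + (x * (0 - p)) ^ 2) ≤ 1 + x ^ 2 := by
    nlinarith [sq_nonneg x, sq_nonneg (x * p), sq_nonneg (x * (1 - p)), mul_nonneg h0 (sq_nonneg x), sq_nonneg (x*p*(1-p))]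
  have efinal := Real.add_one_le_exp (x ^ 2)
  nlinarith [Real.exp_pos (x * (1 - p)), Real.exp_pos (x * (0 - p)), mul_le_mul_of_nonneg_left e1 h0, mul_le_mul_of_nonneg_left e2 (by linarith : (0:ℝ) ≤ 1 - p)]


lemma tail_le {p : ℝ} (h0 : 0 ≤ p) (h1 : p ≤ 1) (W : Finset V) (c : V → ℝ)
    (hc : ∀ u ∈ W, |c u| ≤ 2) {t : ℝ} (ht : 0 < t) (htN : t ≤ 4 * W.card) :
    ∑ S ∈ W.powerset.filter (fun S => t ≤ Xc p W c S), mass p W S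
      ≤ Real.exp (-(t ^ 2 / (16 * W.card))) := by
  have hN : (0:ℝ) < W.card := by nlinarith
  set N : ℝ := (W.card : ℝ) with hNdef
  set l : ℝ := t / (8 * N) with hl
  have hl0 : 0 < l := by positivity
  have hl2 : 2 * l ≤ 1 := by
    have heq : 2 * (t / (8 * N)) = t / (4 * N) := by ring
    show 2 * (t / (8 * N)) ≤ 1
    rw [heq, div_le_one (by positivity)]
    linarith
  have step1 : ∑ S ∈ W.powerset.filter (fun S => t ≤ Xc p W c S), mass p W S
      ≤ ∑ S ∈ W.powerset.filter (fun S => t ≤ Xc p W c S),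
          mass p W S * Real.exp (l * (Xc p W c S - t)) := by
    refine Finset.sum_le_sum fun S hS => ?_
    have hXt := (Finset.mem_filter.mp hS).2
    have h1e : (1:ℝ) ≤ Real.exp (l * (Xc p W c S - t)) := by
      rw [← Real.exp_zero]
      exact Real.exp_le_exp.mpr (by nlinarith)
    exact le_mul_of_one_le_right (mass_nonneg h0 h1 W S) h1e
  have step2 : ∑ S ∈ W.powerset.filter (fun S => t ≤ Xc p W c S),
          mass p W S * Real.exp (l * (Xc p W c S - t))
      ≤ ∑ S ∈ W.powerset, mass p W S * Real.exp (l * (Xc p W c S - t)) :=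
    Finset.sum_le_sum_of_subset_of_nonneg (Finset.filter_subset _ _)
      (fun S _ _ => mul_nonneg (mass_nonneg h0 h1 W S) (Real.exp_nonneg _))
  have hXl : ∀ S : Finset V, Xc p W (fun u => l * c u) S = l * Xc p W c S := by
    intro S
    rw [Xc, Xc, Finset.mul_sum]
    exact Finset.sum_congr rfl fun u _ => by ring
  have step3 : ∑ S ∈ W.powerset, mass p W S * Real.exp (l * (Xc p W c S - t))
      = Real.exp (-(l * t)) * ∑ S ∈ W.powerset, mass p W S
          * Real.exp (Xc p W (fun u => l * c u) S) := by
    rw [Finset.mul_sum]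
    refine Finset.sum_congr rfl fun S _ => ?_
    rw [hXl, show l * (Xc p W c S - t) = -(l * t) + l * Xc p W c S by ring, Real.exp_add]
    ring
  have step4 : ∑ S ∈ W.powerset, mass p W S * Real.exp (Xc p W (fun u => l * c u) S)
      ≤ Real.exp (4 * N * l ^ 2) := by
    rw [sum_mass_exp]
    have hprod : ∏ u ∈ W, (p * Real.exp ((l * c u) * (1 - p))
        + (1 - p) * Real.exp ((l * c u) * (0 - p)))
        ≤ ∏ u ∈ W, Real.exp ((l * c u) ^ 2) := by
      refine Finset.prod_le_prod (fun u _ => ?_) (fun u hu => ?_)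
      · have := Real.exp_nonneg ((l * c u) * (1 - p))
        have := Real.exp_nonneg ((l * c u) * (0 - p))
        nlinarith
      · refine factor_le h0 h1 ?_
        rw [abs_mul, abs_of_pos hl0]
        calc l * |c u| ≤ l * 2 := by
              exact mul_le_mul_of_nonneg_left (hc u hu) hl0.le
          _ ≤ 1 := by linarith
    refine hprod.trans ?_
    rw [← Real.exp_sum]
    refine Real.exp_le_exp.mpr ?_
    have : ∀ u ∈ W, (l * c u) ^ 2 ≤ 4 * l ^ 2 := by
      intro u hu
      have h4 : (c u) ^ 2 ≤ 4 := by
        have := hc u hu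
        nlinarith [abs_nonneg (c u), sq_abs (c u), neg_abs_le (c u), le_abs_self (c u)]
      nlinarith [sq_nonneg l]
    calc ∑ u ∈ W, (l * c u) ^ 2 ≤ ∑ u ∈ W, 4 * l ^ 2 := Finset.sum_le_sum this
      _ = N * (4 * l ^ 2) := by rw [Finset.sum_const, nsmul_eq_mul]
      _ = 4 * N * l ^ 2 := by ring
  have final : Real.exp (-(l * t)) * Real.exp (4 * N * l ^ 2)
      = Real.exp (-(t ^ 2 / (16 * N))) := by
    rw [← Real.exp_add]
    congr 1
    rw [hl]
    field_simp
    ring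
  calc ∑ S ∈ W.powerset.filter (fun S => t ≤ Xc p W c S), mass p W S
      ≤ Real.exp (-(l * t)) * ∑ S ∈ W.powerset, mass p W S
          * Real.exp (Xc p W (fun u => l * c u) S) := by
        rw [← step3]; exact step1.trans step2
    _ ≤ Real.exp (-(l * t)) * Real.exp (4 * N * l ^ 2) :=
        mul_le_mul_of_nonneg_left step4 (Real.exp_nonneg _)
    _ = Real.exp (-(t ^ 2 / (16 * N))) := final


lemma rpow_pow_eq (x : ℝ) (hx : 0 ≤ x) (e : ℝ) (n : ℕ) :
    (x ^ e) ^ (n : ℕ) = x ^ (e * n) := by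
  rw [← Real.rpow_natCast (x ^ e) n, ← Real.rpow_mul hx]

lemma union_num {N : ℝ} (hN1 : 1 ≤ N) :
    (2 + 2 * N) * Real.exp (-(16 * N ^ ((1:ℝ)/4))) < 1 := by
  have hN0 : (0:ℝ) < N := by linarith
  set y : ℝ := 16 * N ^ ((1:ℝ)/4) with hy
  have hy0 : 0 ≤ y := by positivity
  have hexp : y ^ 6 / 720 ≤ Real.exp y := by
    have h := Real.sum_le_exp_of_nonneg hy0 7
    have h6 : y ^ 6 / 720 ≤ ∑ i ∈ Finset.range 7, y ^ i / (i.factorial : ℝ) := by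
      have := Finset.single_le_sum (f := fun i => y ^ i / (i.factorial : ℝ))
        (fun i _ => by positivity) (Finset.self_mem_range_succ 6)
      simpa [Nat.factorial] using this
    linarith
  have hy6 : y ^ 6 = 16 ^ 6 * N ^ ((3:ℝ)/2) := by
    rw [hy, mul_pow, rpow_pow_eq N hN0.le]
    norm_num
  have hN32 : N ≤ N ^ ((3:ℝ)/2) := by
    nth_rewrite 1 [← Real.rpow_one N]
    exact Real.rpow_le_rpow_of_exponent_le hN1 (by norm_num)
  have hbig : 2 + 2 * N < y ^ 6 / 720 := by
    rw [hy6]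
    nlinarith
  have : 2 + 2 * N < Real.exp y := lt_of_lt_of_le hbig hexp
  rw [Real.exp_neg]
  have hep := Real.exp_pos y
  have h1 : (2 + 2 * N) * (Real.exp y)⁻¹ < Real.exp y * (Real.exp y)⁻¹ :=
    mul_lt_mul_of_pos_right this (inv_pos.mpr hep)
  rwa [mul_inv_cancel₀ (ne_of_gt hep)] at h1

lemma exists_good {p : ℝ} (h0 : 0 ≤ p) (h1 : p ≤ 1) (W : Finset V) (h256 : 256 ≤ W.card)
    (cf : V → V → ℝ) (hcf : ∀ v u, |cf v u| ≤ 2) :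
    ∃ S ∈ W.powerset,
      |Xc p W (fun _ => 1) S| ≤ 16 * (W.card:ℝ) ^ ((5:ℝ)/8) ∧
      ∀ v ∈ W, |Xc p W (cf v) S| ≤ 16 * (W.card:ℝ) ^ ((5:ℝ)/8) := by
  classical
  set N : ℝ := (W.card : ℝ) with hNdef
  have hN1 : (1:ℝ) ≤ N := by
    rw [hNdef]; exact_mod_cast le_trans (by norm_num) h256
  have hN0 : (0:ℝ) < N := by linarith
  set t : ℝ := 16 * N ^ ((5:ℝ)/8) with ht
  have ht0 : 0 < t := by positivity
  -- t ≤ 4 N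
  have hN38 : (4:ℝ) ≤ N ^ ((3:ℝ)/8) := by
    have h1' : ((256:ℝ)) ^ ((3:ℝ)/8) ≤ N ^ ((3:ℝ)/8) := by
      apply Real.rpow_le_rpow (by norm_num) _ (by norm_num)
      rw [hNdef]; exact_mod_cast h256
    have h2' : ((256:ℝ)) ^ ((3:ℝ)/8) = 8 := by
      rw [show (256:ℝ) = 2 ^ (8:ℕ) by norm_num, ← Real.rpow_natCast 2 8,
        ← Real.rpow_mul (by norm_num)]
      norm_num
    linarith
  have htN : t ≤ 4 * N := by
    have : N = N ^ ((5:ℝ)/8) * N ^ ((3:ℝ)/8) := by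
      rw [← Real.rpow_add hN0]; norm_num
    have h58 : (0:ℝ) < N ^ ((5:ℝ)/8) := Real.rpow_pos_of_pos hN0 _
    calc t = 4 * (N ^ ((5:ℝ)/8) * 4) := by rw [ht]; ring
      _ ≤ 4 * (N ^ ((5:ℝ)/8) * N ^ ((3:ℝ)/8)) := by nlinarith
      _ = 4 * N := by rw [← this]
  -- the tail bound value
  have htail : t ^ 2 / (16 * N) = 16 * N ^ ((1:ℝ)/4) := by
    have h2 : t ^ 2 = 256 * N ^ ((5:ℝ)/4) := by
      rw [ht, mul_pow, rpow_pow_eq N hN0.le]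
      norm_num
    rw [h2, show ((5:ℝ)/4) = (1:ℝ)/4 + 1 by norm_num, Real.rpow_add hN0,
      Real.rpow_one]
    field_simp
    ring
  by_contra hcon
  push_neg at hcon
  -- indicators
  set E : ℝ := Real.exp (-(t ^ 2 / (16 * N))) with hE
  have tail_bound : ∀ c : V → ℝ, (∀ u ∈ W, |c u| ≤ 2) →
      ∑ S ∈ W.powerset.filter (fun S => t ≤ Xc p W c S), mass p W S ≤ E :=
    fun c hc => tail_le h0 h1 W c hc ht0 htN
  set gone : Finset V → ℝ := fun S =>
    (if t ≤ Xc p W (fun _ => (1:ℝ)) S then (1:ℝ) else 0)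
    + (if t ≤ Xc p W (fun _ => -(1:ℝ)) S then (1:ℝ) else 0) with hgone
  set gv : V → Finset V → ℝ := fun v S =>
    (if t ≤ Xc p W (cf v) S then (1:ℝ) else 0)
    + (if t ≤ Xc p W (fun u => -(cf v u)) S then (1:ℝ) else 0) with hgv
  have gv_nonneg : ∀ v S, 0 ≤ gv v S := by
    intro v S; rw [hgv]; dsimp only; split <;> split <;> norm_num
  have gone_nonneg : ∀ S, 0 ≤ gone S := by
    intro S; rw [hgone]; dsimp only; split <;> split <;> norm_num
  have key : (1:ℝ) ≤ ∑ S ∈ W.powerset, mass p W S * (gone S + ∑ v ∈ W, gv v S) := by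
    calc (1:ℝ) = ∑ S ∈ W.powerset, mass p W S := (sum_mass p W).symm
      _ ≤ _ := by
        refine Finset.sum_le_sum fun S hS => ?_
        have hbad := hcon S hS
        have hF : 1 ≤ gone S + ∑ v ∈ W, gv v S := by
          by_cases hA : |Xc p W (fun _ => (1:ℝ)) S| ≤ t
          · obtain ⟨v, hv, hlt⟩ := hbad hA
            have h1gv : 1 ≤ gv v S := by
              rw [hgv]; dsimp only
              rcases abs_cases (Xc p W (cf v) S) with ⟨heq, _⟩ | ⟨heq, _⟩
              · have hx : t ≤ Xc p W (cf v) S := by rw [← heq]; exact hlt.le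
                rw [if_pos hx]
                have : (0:ℝ) ≤ if t ≤ Xc p W (fun u => -(cf v u)) S then (1:ℝ) else 0 := by
                  split <;> norm_num
                linarith
              · have hx : t ≤ Xc p W (fun u => -(cf v u)) S := by
                  rw [Xc_neg]; linarith
                rw [if_pos hx]
                have : (0:ℝ) ≤ if t ≤ Xc p W (cf v) S then (1:ℝ) else 0 := by
                  split <;> norm_num
                linarith
            have hsum : gv v S ≤ ∑ v ∈ W, gv v S :=
              Finset.single_le_sum (fun v _ => gv_nonneg v S) hv
            linarith [gone_nonneg S]
          · push_neg at hA
            have h1g : 1 ≤ gone S := by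
              rw [hgone]; dsimp only
              rcases abs_cases (Xc p W (fun _ => (1:ℝ)) S) with ⟨heq, _⟩ | ⟨heq, _⟩
              · have hx : t ≤ Xc p W (fun _ : V => (1:ℝ)) S := by rw [← heq]; exact hA.le
                rw [if_pos hx]
                have : (0:ℝ) ≤ if t ≤ Xc p W (fun _ => -(1:ℝ)) S then (1:ℝ) else 0 := by
                  split <;> norm_num
                linarith
              · have hx : t ≤ Xc p W (fun _ : V => -(1:ℝ)) S := by
                  rw [show (fun _ : V => -(1:ℝ)) = (fun u : V => -((fun _ : V => (1:ℝ)) u)) from rfl,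
                    Xc_neg]
                  linarith
                rw [if_pos hx]
                have : (0:ℝ) ≤ if t ≤ Xc p W (fun _ : V => (1:ℝ)) S then (1:ℝ) else 0 := by
                  split <;> norm_num
                linarith
            have : (0:ℝ) ≤ ∑ v ∈ W, gv v S := Finset.sum_nonneg fun v _ => gv_nonneg v S
            linarith
        calc mass p W S = mass p W S * 1 := by ring
          _ ≤ _ := mul_le_mul_of_nonneg_left hF (mass_nonneg h0 h1 W S)
  -- expand and bound by tails
  have ind_sum : ∀ c : V → ℝ, (∀ u ∈ W, |c u| ≤ 2) →
      ∑ S ∈ W.powerset, mass p W S * (if t ≤ Xc p W c S then (1:ℝ) else 0) ≤ E := by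
    intro c hc
    have : ∑ S ∈ W.powerset, mass p W S * (if t ≤ Xc p W c S then (1:ℝ) else 0)
        = ∑ S ∈ W.powerset.filter (fun S => t ≤ Xc p W c S), mass p W S := by
      rw [Finset.sum_filter]
      exact Finset.sum_congr rfl fun S _ => by split <;> simp
    rw [this]
    exact tail_bound c hc
  have expand : ∑ S ∈ W.powerset, mass p W S * (gone S + ∑ v ∈ W, gv v S)
      ≤ (2 + 2 * N) * E := by
    have e1 : ∑ S ∈ W.powerset, mass p W S * (gone S + ∑ v ∈ W, gv v S)
        = (∑ S ∈ W.powerset, mass p W S * gone S)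
          + ∑ v ∈ W, ∑ S ∈ W.powerset, mass p W S * gv v S := by
      calc ∑ S ∈ W.powerset, mass p W S * (gone S + ∑ v ∈ W, gv v S)
          = ∑ S ∈ W.powerset, (mass p W S * gone S + ∑ v ∈ W, mass p W S * gv v S) :=
            Finset.sum_congr rfl fun S _ => by rw [mul_add, Finset.mul_sum]
        _ = (∑ S ∈ W.powerset, mass p W S * gone S)
            + ∑ S ∈ W.powerset, ∑ v ∈ W, mass p W S * gv v S := Finset.sum_add_distrib
        _ = _ := by rw [Finset.sum_comm]
    rw [e1]
    have hone : ∑ S ∈ W.powerset, mass p W S * gone S ≤ 2 * E := by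
      have := ind_sum (fun _ => (1:ℝ)) (fun u _ => by norm_num)
      have h2 := ind_sum (fun _ => -(1:ℝ)) (fun u _ => by norm_num)
      calc ∑ S ∈ W.powerset, mass p W S * gone S
          = (∑ S ∈ W.powerset, mass p W S * (if t ≤ Xc p W (fun _ => (1:ℝ)) S then (1:ℝ) else 0))
            + ∑ S ∈ W.powerset, mass p W S * (if t ≤ Xc p W (fun _ => -(1:ℝ)) S then (1:ℝ) else 0) := by
            rw [← Finset.sum_add_distrib]
            exact Finset.sum_congr rfl fun S _ => by rw [hgone]; ring
        _ ≤ 2 * E := by linarith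
    have hv : ∀ v ∈ W, ∑ S ∈ W.powerset, mass p W S * gv v S ≤ 2 * E := by
      intro v _
      have := ind_sum (cf v) (fun u _ => hcf v u)
      have h2 := ind_sum (fun u => -(cf v u)) (fun u _ => by
        rw [abs_neg]; exact hcf v u)
      calc ∑ S ∈ W.powerset, mass p W S * gv v S
          = (∑ S ∈ W.powerset, mass p W S * (if t ≤ Xc p W (cf v) S then (1:ℝ) else 0))
            + ∑ S ∈ W.powerset, mass p W S * (if t ≤ Xc p W (fun u => -(cf v u)) S then (1:ℝ) else 0) := by
            rw [← Finset.sum_add_distrib]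
            exact Finset.sum_congr rfl fun S _ => by rw [hgv]; ring
        _ ≤ 2 * E := by linarith
    have hvsum : ∑ v ∈ W, ∑ S ∈ W.powerset, mass p W S * gv v S ≤ N * (2 * E) := by
      calc ∑ v ∈ W, ∑ S ∈ W.powerset, mass p W S * gv v S
          ≤ ∑ v ∈ W, 2 * E := Finset.sum_le_sum hv
        _ = N * (2 * E) := by rw [Finset.sum_const, nsmul_eq_mul]
    nlinarith
  have hcontra := union_num hN1
  rw [← htail] at hcontra
  have hE1 : (1:ℝ) ≤ (2 + 2 * N) * E := le_trans key expand
  rw [hE] at hE1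
  linarith


lemma split_step (cf : V → V → ℝ) (hcf0 : ∀ v u, 0 ≤ cf v u) (hcf2 : ∀ v u, cf v u ≤ 2)
    (W : Finset V) (h256 : 256 ≤ W.card) (a b : ℕ) (hab : W.card = a + b) :
    ∃ A ⊆ W, A.card = a ∧ ∀ v ∈ W,
      ((a:ℝ)/(W.card:ℝ)) * (∑ u ∈ W, cf v u) - 48 * (W.card:ℝ) ^ ((5:ℝ)/8) ≤ ∑ u ∈ A, cf v u ∧
      ((b:ℝ)/(W.card:ℝ)) * (∑ u ∈ W, cf v u) - 48 * (W.card:ℝ) ^ ((5:ℝ)/8) ≤ ∑ u ∈ W \ A, cf v u := by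
  classical
  set N : ℝ := (W.card : ℝ) with hNdef
  have hN0 : (0:ℝ) < N := by
    rw [hNdef]; exact_mod_cast lt_of_lt_of_le (by norm_num) h256
  set p : ℝ := (a:ℝ) / N with hp
  have haN : (a:ℝ) ≤ N := by rw [hNdef, hab]; push_cast; linarith
  have hp0 : 0 ≤ p := by positivity
  have hp1 : p ≤ 1 := by rw [hp, div_le_one hN0]; exact haN
  have hcfabs : ∀ v u, |cf v u| ≤ 2 := fun v u => by
    rw [abs_of_nonneg (hcf0 v u)]; exact hcf2 v u
  obtain ⟨S, hSmem, hsize, hdeg⟩ := exists_good hp0 hp1 W h256 cf hcfabs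
  have hSW : S ⊆ W := Finset.mem_powerset.mp hSmem
  set t : ℝ := 16 * N ^ ((5:ℝ)/8) with ht
  have ht0 : 0 ≤ t := by positivity
  have hpN : p * N = a := by rw [hp]; field_simp
  -- size identity
  have hXsize : Xc p W (fun _ => (1:ℝ)) S = (S.card : ℝ) - (a:ℝ) := by
    rw [Xc]
    simp only [one_mul]
    rw [Finset.sum_sub_distrib, Finset.sum_boole, Finset.sum_const, nsmul_eq_mul]
    have : W.filter (fun u => u ∈ S) = S := by
      ext u; simp only [Finset.mem_filter]
      exact ⟨fun h => h.2, fun h => ⟨hSW h, h⟩⟩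
    rw [this, ← hNdef, mul_comm, hpN]
  have hksize : |(S.card : ℝ) - (a:ℝ)| ≤ t := by rw [← hXsize]; exact hsize
  -- degree identity
  have hXdeg : ∀ v, Xc p W (cf v) S = (∑ u ∈ S, cf v u) - p * ∑ u ∈ W, cf v u := by
    intro v
    rw [Xc]
    have : ∀ u ∈ W, cf v u * ((if u ∈ S then (1:ℝ) else 0) - p)
        = (if u ∈ S then cf v u else 0) - p * cf v u := by
      intro u _; split_ifs <;> ring
    rw [Finset.sum_congr rfl this, Finset.sum_sub_distrib, Finset.sum_ite_mem,
      Finset.inter_eq_right.mpr hSW, Finset.mul_sum]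
  have hdegS : ∀ v ∈ W, |(∑ u ∈ S, cf v u) - p * ∑ u ∈ W, cf v u| ≤ t := by
    intro v hv
    rw [← hXdeg v]; exact hdeg v hv
  have hq : (b:ℝ)/N = 1 - p := by
    rw [hp]
    field_simp
    rw [hNdef, hab]
    push_cast
    ring
  have hsum_le : ∀ (v : V) (A B : Finset V), A ⊆ B → ∑ u ∈ A, cf v u ≤ ∑ u ∈ B, cf v u :=
    fun v A B hAB => Finset.sum_le_sum_of_subset_of_nonneg hAB (fun u _ _ => hcf0 v u)
  have hsum_card : ∀ (v : V) (A : Finset V), ∑ u ∈ A, cf v u ≤ 2 * A.card := by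
    intro v A
    calc ∑ u ∈ A, cf v u ≤ ∑ u ∈ A, 2 := Finset.sum_le_sum fun u _ => hcf2 v u
      _ = 2 * A.card := by rw [Finset.sum_const, nsmul_eq_mul]; ring
  have hsum_nonneg : ∀ (v : V) (A : Finset V), 0 ≤ ∑ u ∈ A, cf v u :=
    fun v A => Finset.sum_nonneg fun u _ => hcf0 v u
  rcases le_or_gt a S.card with hak | hak
  · -- remove elements from S
    obtain ⟨A, hAS, hAcard⟩ := Finset.exists_subset_card_eq hak
    have hAW : A ⊆ W := hAS.trans hSW
    refine ⟨A, hAW, hAcard, fun v hv => ?_⟩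
    have hksle : (S.card : ℝ) - a ≤ t := by
      have := (abs_le.mp hksize).2; linarith
    have hSA : ∑ u ∈ S, cf v u - ∑ u ∈ A, cf v u ≤ 2 * ((S.card : ℝ) - a) := by
      rw [← Finset.sum_sdiff hAS]
      have h1 : ∑ u ∈ S \ A, cf v u ≤ 2 * ((S \ A).card : ℝ) := hsum_card v _
      have h2 : ((S \ A).card : ℝ) = (S.card : ℝ) - a := by
        rw [Finset.card_sdiff_of_subset hAS, hAcard, Nat.cast_sub hak]
      linarith
    have hlo := (abs_le.mp (hdegS v hv)).1
    have hhi := (abs_le.mp (hdegS v hv)).2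
    constructor
    · -- A side
      have : p * ∑ u ∈ W, cf v u - 3 * t ≤ ∑ u ∈ A, cf v u := by linarith
      rw [hp] at this
      calc ((a:ℝ)/N) * (∑ u ∈ W, cf v u) - 48 * N ^ ((5:ℝ)/8)
          = (a:ℝ)/N * (∑ u ∈ W, cf v u) - 3 * t := by rw [ht]; ring
        _ ≤ ∑ u ∈ A, cf v u := this
    · -- complement side
      have hAle : ∑ u ∈ A, cf v u ≤ p * (∑ u ∈ W, cf v u) + t := by
        have := hsum_le v A S hAS
        linarith
      have hcompl : ∑ u ∈ W \ A, cf v u = (∑ u ∈ W, cf v u) - ∑ u ∈ A, cf v u := by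
        rw [← Finset.sum_sdiff hAW]; ring
      rw [hcompl, hq]
      calc (1 - p) * (∑ u ∈ W, cf v u) - 48 * N ^ ((5:ℝ)/8)
          = (∑ u ∈ W, cf v u) - (p * (∑ u ∈ W, cf v u) + t) - 2 * t := by rw [ht]; ring
        _ ≤ (∑ u ∈ W, cf v u) - ∑ u ∈ A, cf v u := by nlinarith [ht0]
  · -- add elements to S
    have hkle : a - S.card ≤ (W \ S).card := by
      rw [Finset.card_sdiff_of_subset hSW]
      have haW : a ≤ W.card := by rw [hab]; omega
      omega
    obtain ⟨T, hTsub, hTcard⟩ := Finset.exists_subset_card_eq hkle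
    have hST : Disjoint S T :=
      Finset.disjoint_left.mpr fun x hxS hxT => (Finset.mem_sdiff.mp (hTsub hxT)).2 hxS
    set A := S ∪ T with hA
    have hAW : A ⊆ W := Finset.union_subset hSW (hTsub.trans (Finset.sdiff_subset))
    have hAcard : A.card = a := by
      rw [hA, Finset.card_union_of_disjoint hST, hTcard]
      omega
    refine ⟨A, hAW, hAcard, fun v hv => ?_⟩
    have hksle : (a:ℝ) - S.card ≤ t := by
      have := (abs_le.mp hksize).1; linarith
    have hAsum : ∑ u ∈ A, cf v u = ∑ u ∈ S, cf v u + ∑ u ∈ T, cf v u := by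
      rw [hA, Finset.sum_union hST]
    have hTle : ∑ u ∈ T, cf v u ≤ 2 * ((a:ℝ) - S.card) := by
      have h1 := hsum_card v T
      rw [hTcard] at h1
      have h2 : ((a - S.card : ℕ) : ℝ) = (a:ℝ) - S.card := by
        rw [Nat.cast_sub hak.le]
      linarith
    have hlo := (abs_le.mp (hdegS v hv)).1
    have hhi := (abs_le.mp (hdegS v hv)).2
    constructor
    · have hTnn := hsum_nonneg v T
      rw [hp] at hlo ⊢
      calc ((a:ℝ)/N) * (∑ u ∈ W, cf v u) - 48 * N ^ ((5:ℝ)/8)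
          ≤ ((a:ℝ)/N) * (∑ u ∈ W, cf v u) - t := by rw [ht]; nlinarith [ht0]
        _ ≤ ∑ u ∈ S, cf v u := by linarith
        _ ≤ ∑ u ∈ A, cf v u := by linarith
    · have hcompl : ∑ u ∈ W \ A, cf v u = (∑ u ∈ W, cf v u) - ∑ u ∈ A, cf v u := by
        rw [← Finset.sum_sdiff hAW]; ring
      have hAle : ∑ u ∈ A, cf v u ≤ p * (∑ u ∈ W, cf v u) + 3 * t := by
        rw [hAsum]
        linarith
      rw [hcompl, hq]
      calc (1 - p) * (∑ u ∈ W, cf v u) - 48 * N ^ ((5:ℝ)/8)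
          = (∑ u ∈ W, cf v u) - (p * (∑ u ∈ W, cf v u) + 3 * t) := by rw [ht]; ring
        _ ≤ (∑ u ∈ W, cf v u) - ∑ u ∈ A, cf v u := by linarith


noncomputable def Err (l m : ℕ) : ℝ :=
  768 * (l:ℝ) ^ (-(3/8:ℝ)) * (2 - (m:ℝ) ^ (-(3/8:ℝ)))

lemma err_one_nonneg {l : ℕ} : 0 ≤ Err l 1 := by
  rw [Err]
  push_cast
  rw [Real.one_rpow]
  have : (0:ℝ) ≤ (l:ℝ) ^ (-(3/8:ℝ)) := Real.rpow_nonneg (by positivity) _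
  nlinarith

lemma three_pow_le : ((3:ℝ)) ^ ((5:ℝ)/8) ≤ 2 := by
  apply le_of_pow_le_pow_left₀ (n := 8) (by norm_num) (by norm_num)
  rw [rpow_pow_eq (3:ℝ) (by norm_num) ((5:ℝ)/8) 8]
  rw [show (5:ℝ)/8 * (8:ℕ) = ((5:ℕ):ℝ) by push_cast; ring, Real.rpow_natCast]
  norm_num

lemma ratio_pow_le : ((3/2:ℝ)) ^ (-(3/8:ℝ)) ≤ 7/8 := by
  have hz : (8/7:ℝ) ≤ (3/2:ℝ) ^ ((3:ℝ)/8) := by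
    apply le_of_pow_le_pow_left₀ (n := 8) (by norm_num) (by positivity)
    rw [rpow_pow_eq (3/2:ℝ) (by norm_num) ((3:ℝ)/8) 8]
    rw [show (3:ℝ)/8 * (8:ℕ) = ((3:ℕ):ℝ) by push_cast; ring, Real.rpow_natCast]
    norm_num
  have hzpos : (0:ℝ) < (3/2:ℝ) ^ ((3:ℝ)/8) := Real.rpow_pos_of_pos (by norm_num) _
  rw [show (-(3/8:ℝ)) = -((3:ℝ)/8) by norm_num, Real.rpow_neg (by norm_num : (0:ℝ) ≤ 3/2)]
  have hinv : ((3/2:ℝ) ^ ((3:ℝ)/8))⁻¹ * ((3/2:ℝ) ^ ((3:ℝ)/8)) = 1 :=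
    inv_mul_cancel₀ (ne_of_gt hzpos)
  nlinarith

set_option maxHeartbeats 2000000 in
lemma err_step {l m mi : ℕ} (h1l : 1 ≤ l) (h1 : 1 ≤ mi) (h3 : m ≤ 3 * mi)
    (h32 : 3 * mi ≤ 2 * m) :
    48 * (((l * m : ℕ)):ℝ) ^ ((5:ℝ)/8) / (((l * mi : ℕ)):ℝ) + Err l mi ≤ Err l m := by
  have hL : (1:ℝ) ≤ (l:ℝ) := by exact_mod_cast h1l
  have hMi : (1:ℝ) ≤ (mi:ℝ) := by exact_mod_cast h1
  have hM : (1:ℝ) ≤ (m:ℝ) := by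
    have : 1 ≤ m := by omega
    exact_mod_cast this
  have hL0 : (0:ℝ) < l := by linarith
  have hMi0 : (0:ℝ) < mi := by linarith
  have hLMi0 : (0:ℝ) < (l:ℝ) * mi := by positivity
  have hM3 : (m:ℝ) ≤ 3 * mi := by exact_mod_cast h3
  have hM32 : 3 * (mi:ℝ) ≤ 2 * m := by exact_mod_cast h32
  set X : ℝ := (l:ℝ) ^ (-(3/8:ℝ)) * (mi:ℝ) ^ (-(3/8:ℝ)) with hX
  have hX0 : 0 ≤ X := by
    apply mul_nonneg <;> exact Real.rpow_nonneg (by positivity) _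
  -- LHS term bound
  have key4 : ((l:ℝ) * mi) ^ ((5:ℝ)/8) / ((l:ℝ) * mi) = ((l:ℝ) * mi) ^ (-(3/8:ℝ)) := by
    rw [div_eq_mul_inv, ← Real.rpow_neg_one ((l:ℝ) * mi), ← Real.rpow_add hLMi0]
    norm_num
  have key5 : ((l:ℝ) * mi) ^ (-(3/8:ℝ)) = X := by
    rw [hX, ← Real.mul_rpow (by positivity) (by positivity)]
  have lhs_le : 48 * (((l * m : ℕ)):ℝ) ^ ((5:ℝ)/8) / (((l * mi : ℕ)):ℝ) ≤ 96 * X := by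
    push_cast
    have k1 : ((l:ℝ) * m) ^ ((5:ℝ)/8) ≤ (3 * ((l:ℝ) * mi)) ^ ((5:ℝ)/8) := by
      apply Real.rpow_le_rpow (by positivity) _ (by norm_num)
      nlinarith
    have k2 : ((3:ℝ) * ((l:ℝ) * mi)) ^ ((5:ℝ)/8)
        = (3:ℝ) ^ ((5:ℝ)/8) * ((l:ℝ) * mi) ^ ((5:ℝ)/8) :=
      Real.mul_rpow (by norm_num) (by positivity)
    have k3 : (3:ℝ) ^ ((5:ℝ)/8) * ((l:ℝ) * mi) ^ ((5:ℝ)/8)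
        ≤ 2 * ((l:ℝ) * mi) ^ ((5:ℝ)/8) := by
      have := Real.rpow_nonneg (le_of_lt hLMi0) ((5:ℝ)/8)
      nlinarith [three_pow_le]
    have hnum : ((l:ℝ) * m) ^ ((5:ℝ)/8) ≤ 2 * ((l:ℝ) * mi) ^ ((5:ℝ)/8) := by linarith
    calc 48 * ((l:ℝ) * m) ^ ((5:ℝ)/8) / ((l:ℝ) * mi)
        ≤ 48 * (2 * ((l:ℝ) * mi) ^ ((5:ℝ)/8)) / ((l:ℝ) * mi) := by
          have h48 : 48 * ((l:ℝ) * m) ^ ((5:ℝ)/8) ≤ 48 * (2 * ((l:ℝ) * mi) ^ ((5:ℝ)/8)) := by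
            nlinarith
          gcongr
      _ = 96 * (((l:ℝ) * mi) ^ ((5:ℝ)/8) / ((l:ℝ) * mi)) := by ring
      _ = 96 * X := by rw [key4, key5]
  -- RHS gain bound
  have key6 : (m:ℝ) ^ (-(3/8:ℝ)) ≤ (7/8) * (mi:ℝ) ^ (-(3/8:ℝ)) := by
    have hm32 : (3/2:ℝ) * mi ≤ m := by linarith
    have k1 : (m:ℝ) ^ (-(3/8:ℝ)) ≤ ((3/2:ℝ) * mi) ^ (-(3/8:ℝ)) := by
      apply Real.rpow_le_rpow_of_nonpos (by positivity) hm32 (by norm_num)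
    have k2 : ((3/2:ℝ) * mi) ^ (-(3/8:ℝ))
        = (3/2:ℝ) ^ (-(3/8:ℝ)) * (mi:ℝ) ^ (-(3/8:ℝ)) :=
      Real.mul_rpow (by norm_num) (by positivity)
    have k3 := ratio_pow_le
    have hminn : (0:ℝ) ≤ (mi:ℝ) ^ (-(3/8:ℝ)) := Real.rpow_nonneg (by positivity) _
    nlinarith
  have hLnn : (0:ℝ) ≤ (l:ℝ) ^ (-(3/8:ℝ)) := Real.rpow_nonneg (by positivity) _
  have gain : 96 * X ≤ 768 * (l:ℝ) ^ (-(3/8:ℝ))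
      * ((mi:ℝ) ^ (-(3/8:ℝ)) - (m:ℝ) ^ (-(3/8:ℝ))) := by
    have : (1/8:ℝ) * (mi:ℝ) ^ (-(3/8:ℝ)) ≤ (mi:ℝ) ^ (-(3/8:ℝ)) - (m:ℝ) ^ (-(3/8:ℝ)) := by
      linarith [key6]
    rw [hX]
    nlinarith [Real.rpow_nonneg (show (0:ℝ) ≤ (mi:ℝ) by positivity) (-(3/8:ℝ))]
  rw [Err, Err]
  nlinarith [lhs_le, gain]

lemma err_final {l m : ℕ} (hl : 160 ^ 24 ≤ l) (hm : 1 ≤ m) :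
    Err l m ≤ 10 * (l:ℝ) ^ (-(1/3:ℝ)) := by
  have hL : (160:ℝ) ^ (24:ℕ) ≤ (l:ℝ) := by exact_mod_cast hl
  have hL1 : (1:ℝ) ≤ (l:ℝ) := by nlinarith [pow_pos (show (0:ℝ) < 160 by norm_num) 24]
  have hL0 : (0:ℝ) < (l:ℝ) := by linarith
  have h160 : (160:ℝ) ≤ (l:ℝ) ^ ((1:ℝ)/24) := by
    have h1 : ((160:ℝ) ^ (24:ℕ)) ^ ((1:ℝ)/24) ≤ (l:ℝ) ^ ((1:ℝ)/24) :=
      Real.rpow_le_rpow (by positivity) hL (by norm_num)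
    have h2 : ((160:ℝ) ^ (24:ℕ)) ^ ((1:ℝ)/24) = 160 := by
      rw [← Real.rpow_natCast 160 24, ← Real.rpow_mul (by norm_num)]
      norm_num
    linarith
  have hLnn : (0:ℝ) ≤ (l:ℝ) ^ (-(3/8:ℝ)) := Real.rpow_nonneg (by positivity) _
  have hsplit : (l:ℝ) ^ (-(3/8:ℝ)) * (l:ℝ) ^ ((1:ℝ)/24) = (l:ℝ) ^ (-(1/3:ℝ)) := by
    rw [← Real.rpow_add hL0]
    norm_num
  have hErr2 : Err l m ≤ 1536 * (l:ℝ) ^ (-(3/8:ℝ)) := by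
    rw [Err]
    have : (0:ℝ) ≤ (m:ℝ) ^ (-(3/8:ℝ)) := Real.rpow_nonneg (by positivity) _
    nlinarith
  have : 1600 * (l:ℝ) ^ (-(3/8:ℝ)) ≤ 10 * (l:ℝ) ^ (-(1/3:ℝ)) := by
    rw [← hsplit]
    nlinarith
  linarith


set_option maxHeartbeats 2000000 in
lemma main_rec (ℓ : ℕ) (hl : 160 ^ 24 ≤ ℓ) (cf : V → V → ℝ)
    (hcf0 : ∀ v u, 0 ≤ cf v u) (hcf2 : ∀ v u, cf v u ≤ 2) :
    ∀ m : ℕ, 1 ≤ m → ∀ W : Finset V, W.card = ℓ * m → ∀ θ : ℝ,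
    (∀ v ∈ W, θ * (W.card : ℝ) ≤ ∑ u ∈ W, cf v u) →
    ∃ parts : Fin m → Finset V,
      (∀ i j (v : V), v ∈ parts i → v ∈ parts j → i = j) ∧
      (∀ i, (parts i).card = ℓ) ∧
      (∀ v ∈ W, ∃ i, v ∈ parts i) ∧
      (∀ i, parts i ⊆ W) ∧
      (∀ i, ∀ v ∈ parts i, (θ - Err ℓ m) * (ℓ:ℝ) ≤ ∑ u ∈ parts i, cf v u) := by
  have hl1 : 1 ≤ ℓ := le_trans (by norm_num) hl
  have h256l : 256 ≤ ℓ := le_trans (by norm_num) hl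
  intro m
  induction m using Nat.strong_induction_on with
  | _ m IH =>
  intro hm W hW θ hθ
  rcases eq_or_lt_of_le hm with hm1 | hm2
  · -- base case m = 1
    subst hm1
    refine ⟨fun _ => W, fun i j v _ _ => Subsingleton.elim i j, fun i => by simpa using hW,
      fun v hv => ⟨0, hv⟩, fun i => Finset.Subset.refl W, fun i v hv => ?_⟩
    have h := hθ v hv
    have hE := err_one_nonneg (l := ℓ)
    have hc : (W.card : ℝ) = (ℓ:ℝ) := by rw [hW]; push_cast; ring
    rw [hc] at h
    have hl0 : (0:ℝ) ≤ (ℓ:ℝ) := by positivity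
    nlinarith
  · -- inductive step m ≥ 2
    have hm2' : 2 ≤ m := hm2
    set m1 := (m + 1) / 2 with hm1def
    set m2 := m / 2 with hm2def
    have hm12 : m1 + m2 = m := by omega
    have h1m1 : 1 ≤ m1 := by omega
    have h1m2 : 1 ≤ m2 := by omega
    have hm1lt : m1 < m := by omega
    have hm2lt : m2 < m := by omega
    have h3m1 : m ≤ 3 * m1 := by omega
    have h32m1 : 3 * m1 ≤ 2 * m := by omega
    have h3m2 : m ≤ 3 * m2 := by omega
    have h32m2 : 3 * m2 ≤ 2 * m := by omega
    have h256 : 256 ≤ W.card := by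
      rw [hW]
      calc 256 ≤ ℓ := h256l
        _ ≤ ℓ * m := Nat.le_mul_of_pos_right ℓ (by omega)
    have hsplitcard : W.card = ℓ * m1 + ℓ * m2 := by rw [hW, ← Nat.mul_add, hm12]
    obtain ⟨A, hAW, hAcard, hAdeg⟩ :=
      split_step cf hcf0 hcf2 W h256 (ℓ * m1) (ℓ * m2) hsplitcard
    have hBcard : (W \ A).card = ℓ * m2 := by
      rw [Finset.card_sdiff_of_subset hAW, hAcard, hsplitcard]
      omega
    have hNR : (W.card : ℝ) = ((ℓ * m : ℕ) : ℝ) := by rw [hW]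
    have hNpos : (0:ℝ) < (W.card : ℝ) := by
      have : 0 < W.card := by omega
      exact_mod_cast this
    have haR : (0:ℝ) < ((ℓ * m1 : ℕ) : ℝ) := by
      have : 0 < ℓ * m1 := Nat.mul_pos (by omega) (by omega)
      exact_mod_cast this
    have hbR : (0:ℝ) < ((ℓ * m2 : ℕ) : ℝ) := by
      have : 0 < ℓ * m2 := Nat.mul_pos (by omega) (by omega)
      exact_mod_cast this
    set ε1 : ℝ := 48 * (((ℓ * m : ℕ)):ℝ) ^ ((5:ℝ)/8) / (((ℓ * m1 : ℕ)):ℝ) with hε1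
    set ε2 : ℝ := 48 * (((ℓ * m : ℕ)):ℝ) ^ ((5:ℝ)/8) / (((ℓ * m2 : ℕ)):ℝ) with hε2
    have hθA : ∀ v ∈ A, (θ - ε1) * ((A.card : ℝ)) ≤ ∑ u ∈ A, cf v u := by
      intro v hv
      have hvW := hAW hv
      have h1 := (hAdeg v hvW).1
      have hθv := hθ v hvW
      have hmul : (((ℓ*m1:ℕ)):ℝ)/(W.card:ℝ) * (θ * (W.card:ℝ))
          ≤ (((ℓ*m1:ℕ)):ℝ)/(W.card:ℝ) * ∑ u ∈ W, cf v u :=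
        mul_le_mul_of_nonneg_left hθv (by positivity)
      have hkey : (((ℓ*m1:ℕ)):ℝ)/(W.card:ℝ) * (θ * (W.card:ℝ)) = θ * ((ℓ*m1:ℕ):ℝ) := by
        field_simp
      have hεa : ε1 * ((ℓ*m1:ℕ):ℝ) = 48 * ((W.card:ℝ)) ^ ((5:ℝ)/8) := by
        rw [hε1, hNR]
        field_simp
      rw [hAcard]
      have hexp : (θ - ε1) * ((ℓ*m1:ℕ):ℝ) = θ * ((ℓ*m1:ℕ):ℝ) - ε1 * ((ℓ*m1:ℕ):ℝ) := by ring
      linarith [h1, hmul, hkey, hεa, hexp]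
    have hθB : ∀ v ∈ W \ A, (θ - ε2) * (((W \ A).card : ℝ)) ≤ ∑ u ∈ W \ A, cf v u := by
      intro v hv
      have hvW := (Finset.mem_sdiff.mp hv).1
      have h1 := (hAdeg v hvW).2
      have hθv := hθ v hvW
      have hmul : (((ℓ*m2:ℕ)):ℝ)/(W.card:ℝ) * (θ * (W.card:ℝ))
          ≤ (((ℓ*m2:ℕ)):ℝ)/(W.card:ℝ) * ∑ u ∈ W, cf v u :=
        mul_le_mul_of_nonneg_left hθv (by positivity)
      have hkey : (((ℓ*m2:ℕ)):ℝ)/(W.card:ℝ) * (θ * (W.card:ℝ)) = θ * ((ℓ*m2:ℕ):ℝ) := by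
        field_simp
      have hεb : ε2 * ((ℓ*m2:ℕ):ℝ) = 48 * ((W.card:ℝ)) ^ ((5:ℝ)/8) := by
        rw [hε2, hNR]
        field_simp
      rw [hBcard]
      have hexp : (θ - ε2) * ((ℓ*m2:ℕ):ℝ) = θ * ((ℓ*m2:ℕ):ℝ) - ε2 * ((ℓ*m2:ℕ):ℝ) := by ring
      linarith [h1, hmul, hkey, hεb, hexp]
    obtain ⟨parts1, huniq1, hcard1, hcov1, hsub1, hdeg1⟩ :=
      IH m1 hm1lt h1m1 A hAcard (θ - ε1) hθA
    obtain ⟨parts2, huniq2, hcard2, hcov2, hsub2, hdeg2⟩ :=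
      IH m2 hm2lt h1m2 (W \ A) hBcard (θ - ε2) hθB
    set parts : Fin m → Finset V := fun i => if h : (i:ℕ) < m1 then parts1 ⟨i, h⟩
      else parts2 ⟨(i:ℕ) - m1, by have := i.isLt; omega⟩ with hparts
    have hp : ∀ (i : Fin m) (hi : (i:ℕ) < m1), parts i = parts1 ⟨(i:ℕ), hi⟩ := by
      intro i hi
      simp only [hparts]
      rw [dif_pos hi]
    have hq : ∀ (i : Fin m) (hi : ¬ (i:ℕ) < m1),
        parts i = parts2 ⟨(i:ℕ) - m1, by have := i.isLt; omega⟩ := by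
      intro i hi
      simp only [hparts]
      rw [dif_neg hi]
    refine ⟨parts, ?_, ?_, ?_, ?_, ?_⟩
    · -- uniqueness
      intro i j v hvi hvj
      by_cases hi : (i:ℕ) < m1 <;> by_cases hj : (j:ℕ) < m1
      · rw [hp i hi] at hvi; rw [hp j hj] at hvj
        have := huniq1 _ _ v hvi hvj
        have hval : (i:ℕ) = (j:ℕ) := by
          have h2 := congrArg Fin.val this
          simpa using h2
        exact Fin.ext hval
      · rw [hp i hi] at hvi; rw [hq j hj] at hvj
        exact absurd (hsub2 _ hvj) (fun hB => (Finset.mem_sdiff.mp hB).2 (hsub1 _ hvi))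
      · rw [hq i hi] at hvi; rw [hp j hj] at hvj
        exact absurd (hsub2 _ hvi) (fun hB => (Finset.mem_sdiff.mp hB).2 (hsub1 _ hvj))
      · rw [hq i hi] at hvi; rw [hq j hj] at hvj
        have := huniq2 _ _ v hvi hvj
        have hval : (i:ℕ) - m1 = (j:ℕ) - m1 := by
          have h2 := congrArg Fin.val this
          simpa using h2
        have hi' := i.isLt
        have hj' := j.isLt
        exact Fin.ext (by omega)
    · -- cards
      intro i
      by_cases hi : (i:ℕ) < m1
      · rw [hp i hi]; exact hcard1 _
      · rw [hq i hi]; exact hcard2 _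
    · -- coverage
      intro v hv
      by_cases hvA : v ∈ A
      · obtain ⟨i1, hi1⟩ := hcov1 v hvA
        refine ⟨⟨(i1:ℕ), by have := i1.isLt; omega⟩, ?_⟩
        rw [hp _ (show ((⟨(i1:ℕ), by have := i1.isLt; omega⟩ : Fin m) : ℕ) < m1 from i1.isLt)]
        have heq : (⟨(i1:ℕ), i1.isLt⟩ : Fin m1) = i1 := Fin.ext rfl
        rw [heq]
        exact hi1
      · have hvB : v ∈ W \ A := Finset.mem_sdiff.mpr ⟨hv, hvA⟩
        obtain ⟨i2, hi2⟩ := hcov2 v hvB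
        refine ⟨⟨m1 + (i2:ℕ), by have := i2.isLt; omega⟩, ?_⟩
        rw [hq _ (show ¬((⟨m1 + (i2:ℕ), by have := i2.isLt; omega⟩ : Fin m) : ℕ) < m1 by
          simp)]
        have heq : (⟨((⟨m1 + (i2:ℕ), by have := i2.isLt; omega⟩ : Fin m) : ℕ) - m1,
            by have := i2.isLt; omega⟩ : Fin m2) = i2 := Fin.ext (by simp)
        rw [heq]
        exact hi2
    · -- subset
      intro i
      by_cases hi : (i:ℕ) < m1
      · rw [hp i hi]; exact (hsub1 _).trans hAW
      · rw [hq i hi]; exact (hsub2 _).trans (Finset.sdiff_subset)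
    · -- degrees
      intro i v hv
      have hl0 : (0:ℝ) ≤ (ℓ:ℝ) := by positivity
      by_cases hi : (i:ℕ) < m1
      · rw [hp i hi] at hv ⊢
        have hd := hdeg1 _ v hv
        have hstep := err_step (l := ℓ) (m := m) (mi := m1) hl1 h1m1 h3m1 h32m1
        rw [← hε1] at hstep
        have : θ - Err ℓ m ≤ (θ - ε1) - Err ℓ m1 := by linarith
        calc (θ - Err ℓ m) * (ℓ:ℝ) ≤ ((θ - ε1) - Err ℓ m1) * (ℓ:ℝ) :=
              mul_le_mul_of_nonneg_right this hl0
          _ ≤ _ := hd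
      · rw [hq i hi] at hv ⊢
        have hd := hdeg2 _ v hv
        have hstep := err_step (l := ℓ) (m := m) (mi := m2) hl1 h1m2 h3m2 h32m2
        rw [← hε2] at hstep
        have : θ - Err ℓ m ≤ (θ - ε2) - Err ℓ m2 := by linarith
        calc (θ - Err ℓ m) * (ℓ:ℝ) ≤ ((θ - ε2) - Err ℓ m2) * (ℓ:ℝ) :=
              mul_le_mul_of_nonneg_right this hl0
          _ ≤ _ := hd

end DPart


/-- There is `ℓ₀` such that for all `ℓ ≥ ℓ₀`, all `δ > 0`, all `m, k` with
`m ≤ 2 ^ k`, and every loopless digraph `G` on `n = ℓ * m` vertices with minimum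
total degree at least `δ * n`, there is a partition of the vertex set into `m`
parts `V₁, …, V_m` (encoded by `P : V → Fin m`), each of size `ℓ`, such that
every induced subdigraph `G[V_i]` has minimum total degree at least
`(δ − 10 ℓ^{−1/3}) ℓ`. -/
theorem digraph_partition_totalDegree :
    ∃ ℓ₀ : ℕ, ∀ ℓ : ℕ, ℓ₀ ≤ ℓ →
    ∀ δ : ℝ, 0 < δ →
    ∀ m k : ℕ, m ≤ 2 ^ k →
    ∀ G : Fin (ℓ * m) → Fin (ℓ * m) → Prop, (∀ v, ¬ G v v) →
    (∀ v : Fin (ℓ * m),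
      δ * ((ℓ : ℝ) * m)
        ≤ (Nat.card {u : Fin (ℓ * m) // G v u} : ℝ)
          + (Nat.card {u : Fin (ℓ * m) // G u v} : ℝ)) →
    ∃ P : Fin (ℓ * m) → Fin m,
      (∀ i : Fin m, Nat.card {v : Fin (ℓ * m) // P v = i} = ℓ) ∧
      ∀ v : Fin (ℓ * m),
        (δ - 10 * (ℓ : ℝ) ^ (-(1 / 3 : ℝ))) * ℓ
          ≤ (Nat.card {u : Fin (ℓ * m) // P u = P v ∧ G v u} : ℝ)
            + (Nat.card {u : Fin (ℓ * m) // P u = P v ∧ G u v} : ℝ) := by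
  classical
  refine ⟨160 ^ 24, ?_⟩
  intro ℓ hℓ δ hδ m k hmk G hG hdeg
  rcases Nat.eq_zero_or_pos m with hm0 | hm1
  · subst hm0
    exact ⟨fun v => False.elim (by have := v.isLt; omega),
      fun i => i.elim0, fun v => False.elim (by have := v.isLt; omega)⟩
  · set cf : Fin (ℓ * m) → Fin (ℓ * m) → ℝ :=
      fun v u => (if G v u then (1:ℝ) else 0) + (if G u v then (1:ℝ) else 0) with hcf
    have hcf0 : ∀ v u, 0 ≤ cf v u := by
      intro v u; rw [hcf]; dsimp only; split <;> split <;> norm_num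
    have hcf2 : ∀ v u, cf v u ≤ 2 := by
      intro v u; rw [hcf]; dsimp only; split <;> split <;> norm_num
    have hWcard : (Finset.univ : Finset (Fin (ℓ * m))).card = ℓ * m := by
      simp
    have hsumcf : ∀ (v : Fin (ℓ * m)) (s : Finset (Fin (ℓ * m))), ∑ u ∈ s, cf v u
        = ((s.filter (fun u => G v u)).card : ℝ) + ((s.filter (fun u => G u v)).card : ℝ) := by
      intro v s
      rw [hcf]
      dsimp only
      rw [Finset.sum_add_distrib, Finset.sum_boole, Finset.sum_boole]
    have hθ : ∀ v ∈ (Finset.univ : Finset (Fin (ℓ * m))),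
        δ * (((Finset.univ : Finset (Fin (ℓ * m))).card : ℝ)) ≤ ∑ u ∈ Finset.univ, cf v u := by
      intro v _
      have h := hdeg v
      have hc1 : (Nat.card {u : Fin (ℓ * m) // G v u} : ℝ)
          = ((Finset.univ.filter (fun u => G v u)).card : ℝ) := by
        rw [Nat.card_eq_fintype_card, Fintype.card_subtype]
      have hc2 : (Nat.card {u : Fin (ℓ * m) // G u v} : ℝ)
          = ((Finset.univ.filter (fun u => G u v)).card : ℝ) := by
        rw [Nat.card_eq_fintype_card, Fintype.card_subtype]
      rw [hsumcf v, hWcard]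
      rw [hc1, hc2] at h
      push_cast
      push_cast at h
      linarith
    obtain ⟨parts, huniq, hcard, hcov, hsub, hdegp⟩ :=
      DPart.main_rec ℓ hℓ cf hcf0 hcf2 m hm1 Finset.univ hWcard δ hθ
    choose P hP using fun v : Fin (ℓ * m) => hcov v (Finset.mem_univ v)
    have hPiff : ∀ (u : Fin (ℓ * m)) (i : Fin m), P u = i ↔ u ∈ parts i := by
      intro u i
      constructor
      · rintro rfl; exact hP u
      · intro hu; exact huniq _ _ u (hP u) hu
    refine ⟨P, ?_, ?_⟩
    · intro i
      have hfilter : (Finset.univ.filter (fun v => P v = i)) = parts i := by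
        ext v
        simp only [Finset.mem_filter, Finset.mem_univ, true_and]
        exact hPiff v i
      rw [Nat.card_eq_fintype_card, Fintype.card_subtype, hfilter]
      exact hcard i
    · intro v
      have hv := hP v
      have hd := hdegp (P v) v hv
      have h1 : (parts (P v)).filter (fun u => G v u)
          = Finset.univ.filter (fun u => P u = P v ∧ G v u) := by
        ext u
        simp only [Finset.mem_filter, Finset.mem_univ, true_and]
        constructor
        · intro ⟨ha, hb⟩; exact ⟨(hPiff u (P v)).mpr ha, hb⟩
        · intro ⟨ha, hb⟩; exact ⟨(hPiff u (P v)).mp ha, hb⟩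
      have h2 : (parts (P v)).filter (fun u => G u v)
          = Finset.univ.filter (fun u => P u = P v ∧ G u v) := by
        ext u
        simp only [Finset.mem_filter, Finset.mem_univ, true_and]
        constructor
        · intro ⟨ha, hb⟩; exact ⟨(hPiff u (P v)).mpr ha, hb⟩
        · intro ⟨ha, hb⟩; exact ⟨(hPiff u (P v)).mp ha, hb⟩
      have hc1 : (Nat.card {u : Fin (ℓ * m) // P u = P v ∧ G v u} : ℝ)
          = (((parts (P v)).filter (fun u => G v u)).card : ℝ) := by
        rw [Nat.card_eq_fintype_card, Fintype.card_subtype, h1]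
      have hc2 : (Nat.card {u : Fin (ℓ * m) // P u = P v ∧ G u v} : ℝ)
          = (((parts (P v)).filter (fun u => G u v)).card : ℝ) := by
        rw [Nat.card_eq_fintype_card, Fintype.card_subtype, h2]
      rw [hc1, hc2, ← hsumcf v (parts (P v))]
      have herr := DPart.err_final hℓ hm1
      have hl0 : (0:ℝ) ≤ (ℓ:ℝ) := by positivity
      have hfin : (δ - 10 * (ℓ : ℝ) ^ (-(1 / 3 : ℝ))) * (ℓ:ℝ)
          ≤ (δ - DPart.Err ℓ m) * (ℓ:ℝ) := by
        apply mul_le_mul_of_nonneg_right _ hl0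
        have : (-(1/3 : ℝ)) = (-(1/3:ℝ)) := rfl
        linarith [herr]
      exact hfin.trans hd
end
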